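/- For every u ∈ ℂ with u ∉ {0,1} and each m = 1,2,…,8, the multiple m•P of P = (0,0) on E₂(u) is a nonzero affine point whose coordinates x(mP), y(mP) ∈ ℂ(T) are polynomials in T of degree at most 4 and at most 6 respectively; that is, each of P, 2P, …, 8P is an integral point of the arithmetic-genus-2 model E₂(u). -/

import Mathlib

/-!
Adding `P = (0, 0)` to a point `(x, y)` with `x ≠ 0` uses the chord `Y = ℓX` through the origin,
and gives the point `(x', -(ℓ + a₁)x' - a₃)` with `x' = ℓ² + a₁ℓ - a₂ - x`. So if `ℓ = y / x`
is a polynomial in `T`, so is `(x, y) + P`. Since `a₄ = a₆ = 0`, the tangent at `P` is `Y = 0`,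
whence `2P = (-a₂, a₁a₂ - a₃)`. It then suffices to write down the coordinates of `mP` for
`2 ≤ m ≤ 8`, check that `x(mP)` divides `y(mP)` for `m ≤ 7`, and read off the degrees.
-/

open Polynomial WeierstrassCurve

/-- The dehomogenized curve `E₂(u)` of Elkies' paper, over `ℂ(T)`:
`Y² + (T² + (u−2)T − 1)XY − T²(T+1)(T+u)(T+u−1)Y = X³ − T(T+1)(T+u)X²`. -/
noncomputable def E₂ (u : ℂ) : WeierstrassCurve.Affine (RatFunc ℂ) where
  a₁ := algebraMap (Polynomial ℂ) (RatFunc ℂ) (X ^ 2 + C (u - 2) * X - 1)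
  a₂ := algebraMap (Polynomial ℂ) (RatFunc ℂ) (-(X * (X + 1) * (X + C u)))
  a₃ := algebraMap (Polynomial ℂ) (RatFunc ℂ)
    (-(X ^ 2 * (X + 1) * (X + C u) * (X + C (u - 1))))
  a₄ := 0
  a₆ := 0

/-- `Q` is a nonzero point whose coordinates are polynomials in `T` of degrees
at most `2n` and `3n` respectively: an integral point of the genus-`n` model. -/
def IsIntegralPoint (n : ℕ) {W : WeierstrassCurve.Affine (RatFunc ℂ)}
    (Q : W.Point) : Prop :=
  ∃ (x y : RatFunc ℂ) (h : W.Nonsingular x y) (px py : Polynomial ℂ),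
    Q = WeierstrassCurve.Affine.Point.some x y h ∧
    x = algebraMap (Polynomial ℂ) (RatFunc ℂ) px ∧
    y = algebraMap (Polynomial ℂ) (RatFunc ℂ) py ∧
    px.degree ≤ (2 * n : ℕ) ∧ py.degree ≤ (3 * n : ℕ)

namespace WeierstrassCurve.Affine.Point

variable {F : Type*} [Field F] [DecidableEq F] {W : WeierstrassCurve.Affine F}

theorem exists_add_some_zero_zero {Q : W.Point} {x y ℓ : F}
    (hQ : ∃ h : W.Nonsingular x y, Q = some x y h) (h₀ : W.Nonsingular 0 0) (hx : x ≠ 0)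
    (hy : y = ℓ * x) :
    ∃ h : W.Nonsingular (W.addX x 0 ℓ) (W.addY x 0 y ℓ), Q + some 0 0 h₀ = some _ _ h := by
  obtain ⟨h, rfl⟩ := hQ
  obtain rfl : W.slope x 0 y 0 = ℓ := by
    rw [slope_of_X_ne hx, hy, sub_zero, sub_zero, mul_div_cancel_right₀ ℓ hx]
  exact ⟨_, add_of_X_ne hx⟩

theorem exists_two_nsmul_some_zero_zero (h₀ : W.Nonsingular 0 0) (ha₄ : W.a₄ = 0)
    (ha₃ : W.a₃ ≠ 0) :
    ∃ h : W.Nonsingular (-W.a₂) (W.a₁ * W.a₂ - W.a₃), 2 • some 0 0 h₀ = some _ _ h := by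
  have hy : (0 : F) ≠ W.negY 0 0 := by simpa [negY] using ha₃
  have hℓ : W.slope 0 0 0 0 = 0 := by simp [slope_of_Y_ne rfl hy, ha₄]
  have hX : W.addX 0 0 (W.slope 0 0 0 0) = -W.a₂ := by simp [hℓ]
  have hY : W.addY 0 0 0 (W.slope 0 0 0 0) = W.a₁ * W.a₂ - W.a₃ := by
    simp [addY, negY, hℓ]
  rw [two_nsmul, add_self_of_Y_ne hy, ← hX, ← hY]
  exact ⟨_, rfl⟩

end WeierstrassCurve.Affine.Point

namespace E₂

local notation "φ" => algebraMap ℂ[X] (RatFunc ℂ)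

/-- The coordinates of `m • (0, 0)` for `2 ≤ m ≤ 8`, and the slope of the line through
`m • (0, 0)` and `(0, 0)` for `2 ≤ m ≤ 7`; all three are `0` at other indices. -/
noncomputable def xMul (u : ℂ) : ℕ → ℂ[X]
  | 2 => X * (X + 1) * (X + C u)
  | 3 => X * (X + 1) * (X + C (u - 1))
  | 4 => X ^ 2 * (X + C u)
  | 5 => (X + 1) * (X + C u) * (X + C (u - 1))
  | 6 => C (1 - u) * X ^ 2 * (X + 1)
  | 7 => C (u / (u - 1) ^ 2) * X * (X + 1) * (X + C u) * (X + C (u - 1))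
  | 8 => C ((u - 1) / u ^ 2) * X * (X + C u) * (C u * X + C (u - 1))
  | _ => 0

noncomputable def yMul (u : ℂ) : ℕ → ℂ[X]
  | 2 => X * (X + 1) ^ 2 * (X + C u)
  | 3 => X ^ 2 * (X + 1) * (X + C (u - 1))
  | 4 => X ^ 2 * (X + C u) ^ 2
  | 5 => C (1 - u) * (X + 1) ^ 2 * (X + C u) * (X + C (u - 1))
  | 6 => C u * X ^ 3 * (X + 1) ^ 2
  | 7 => C (1 / (u - 1) ^ 3) * X * (X + 1) * (X + C u) ^ 2 * (X + C (u - 1)) *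
      (C u * X + C (u - 1))
  | 8 => C ((u - 1) ^ 2 / u ^ 3) * X ^ 2 * (X + C u) * (C u * X + C (2 * u - 1))
  | _ => 0

noncomputable def chordSlope (u : ℂ) : ℕ → ℂ[X]
  | 2 => X + 1
  | 3 => X
  | 4 => X + C u
  | 5 => C (1 - u) * (X + 1)
  | 6 => -C (u / (u - 1)) * X * (X + 1)
  | 7 => C (1 / (u * (u - 1))) * (X + C u) * (C u * X + C (u - 1))
  | _ => 0

theorem degree_xMul_le (u : ℂ) (m : ℕ) : (xMul u m).degree ≤ 4 := by
  unfold xMul; split <;> compute_degree!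

theorem degree_yMul_le (u : ℂ) (m : ℕ) : (yMul u m).degree ≤ 6 := by
  unfold yMul; split <;> compute_degree!

theorem C_ne_zero {u : ℂ} (hu0 : u ≠ 0) : RatFunc.C u ≠ 0 := (_root_.map_ne_zero _).2 hu0

theorem C_sub_one_ne_zero {u : ℂ} (hu1 : u ≠ 1) : RatFunc.C u - 1 ≠ 0 := by
  simpa using (_root_.map_ne_zero RatFunc.C).2 (sub_ne_zero.2 hu1)

theorem a₃_ne_zero (u : ℂ) : (E₂ u).a₃ ≠ 0 := by
  refine RatFunc.algebraMap_ne_zero (neg_ne_zero.2 ?_)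
  simp only [← C_1, ne_eq, mul_eq_zero, X_add_C_ne_zero]
  simp

theorem xMul_two (u : ℂ) : φ (xMul u 2) = -(E₂ u).a₂ := by
  simp [xMul, E₂]

theorem yMul_two (u : ℂ) : φ (yMul u 2) = (E₂ u).a₁ * (E₂ u).a₂ - (E₂ u).a₃ := by
  simp only [yMul, E₂, ← map_mul, ← map_sub]
  congr 1
  simp only [map_sub, map_one, map_ofNat]
  ring

theorem xMul_ne_zero {u : ℂ} (hu0 : u ≠ 0) (hu1 : u ≠ 1) {n : ℕ} (h2 : 2 ≤ n) (h7 : n ≤ 7) :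
    φ (xMul u n) ≠ 0 := by
  refine RatFunc.algebraMap_ne_zero ?_
  interval_cases n <;>
    simp only [xMul, ← C_1, ne_eq, mul_eq_zero, X_ne_zero, X_add_C_ne_zero,
      C_eq_zero, div_eq_zero_iff, hu0, sub_ne_zero.2 hu1.symm] <;>
    simp [sub_eq_zero, hu1]

theorem yMul_eq_chordSlope_mul_xMul {u : ℂ} (hu0 : u ≠ 0) (hu1 : u ≠ 1) {n : ℕ} (h2 : 2 ≤ n)
    (h7 : n ≤ 7) : φ (yMul u n) = φ (chordSlope u n) * φ (xMul u n) := by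
  interval_cases n <;>
    simp only [xMul, yMul, chordSlope, map_mul, map_add, map_sub, map_neg, map_pow, map_one,
      map_div₀, RatFunc.algebraMap_C, RatFunc.algebraMap_X] <;>
    field_simp [C_ne_zero hu0, C_sub_one_ne_zero hu1]
  ring

theorem addX_chordSlope {u : ℂ} (hu0 : u ≠ 0) (hu1 : u ≠ 1) {n : ℕ} (h2 : 2 ≤ n) (h7 : n ≤ 7) :
    (E₂ u).addX (φ (xMul u n)) 0 (φ (chordSlope u n)) = φ (xMul u (n + 1)) := by
  interval_cases n <;>
    simp only [E₂, Affine.addX, xMul, chordSlope, map_mul, map_add, map_sub, map_neg, map_pow,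
      map_one, map_div₀, map_ofNat, RatFunc.algebraMap_C, RatFunc.algebraMap_X, Nat.reduceAdd] <;>
    field_simp [C_ne_zero hu0, C_sub_one_ne_zero hu1] <;> ring

theorem addY_chordSlope {u : ℂ} (hu0 : u ≠ 0) (hu1 : u ≠ 1) {n : ℕ} (h2 : 2 ≤ n) (h7 : n ≤ 7) :
    (E₂ u).addY (φ (xMul u n)) 0 (φ (yMul u n)) (φ (chordSlope u n)) = φ (yMul u (n + 1)) := by
  interval_cases n <;>
    simp only [E₂, Affine.addY, Affine.negY, Affine.negAddY, Affine.addX, xMul, yMul, chordSlope,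
      map_mul, map_add, map_sub, map_neg, map_pow, map_one, map_div₀, map_ofNat,
      RatFunc.algebraMap_C, RatFunc.algebraMap_X, Nat.reduceAdd] <;>
    field_simp [C_ne_zero hu0, C_sub_one_ne_zero hu1] <;> ring

theorem exists_nsmul_eq [DecidableEq (RatFunc ℂ)] {u : ℂ} (hu0 : u ≠ 0) (hu1 : u ≠ 1)
    (h₀ : (E₂ u).Nonsingular 0 0) {m : ℕ} (h2 : 2 ≤ m) (h8 : m ≤ 8) :
    ∃ h : (E₂ u).Nonsingular (φ (xMul u m)) (φ (yMul u m)),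
      m • Affine.Point.some 0 0 h₀ = Affine.Point.some _ _ h := by
  induction m, h2 using Nat.le_induction with
  | base =>
    rw [xMul_two, yMul_two]
    exact Affine.Point.exists_two_nsmul_some_zero_zero h₀ rfl (a₃_ne_zero u)
  | succ n h2 ih =>
    have h7 : n ≤ 7 := by omega
    rw [succ_nsmul, ← addX_chordSlope hu0 hu1 h2 h7, ← addY_chordSlope hu0 hu1 h2 h7]
    exact Affine.Point.exists_add_some_zero_zero (ih (by omega)) h₀ (xMul_ne_zero hu0 hu1 h2 h7)
      (yMul_eq_chordSlope_mul_xMul hu0 hu1 h2 h7)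

end E₂

open scoped Classical in
theorem stmt_5 (u : ℂ) (hu0 : u ≠ 0) (hu1 : u ≠ 1) :
    ∃ h : (E₂ u).Nonsingular 0 0,
      ∀ m : ℕ, 1 ≤ m → m ≤ 8 →
        IsIntegralPoint 2 (m • (WeierstrassCurve.Affine.Point.some 0 0 h)) := by
  have h₀ : (E₂ u).Nonsingular 0 0 := Affine.nonsingular_zero.2 ⟨rfl, .inl (E₂.a₃_ne_zero u)⟩
  refine ⟨h₀, fun m h1 h8 => ?_⟩
  obtain rfl | h2 := eq_or_lt_of_le h1
  · exact ⟨0, 0, h₀, 0, 0, one_nsmul _, (map_zero _).symm, (map_zero _).symm, by simp, by simp⟩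
  obtain ⟨h, hm⟩ := E₂.exists_nsmul_eq hu0 hu1 h₀ h2 h8
  exact ⟨_, _, h, _, _, hm, rfl, rfl, E₂.degree_xMul_le u m, E₂.degree_yMul_le u m⟩
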